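/- arXiv:2102.05733 — 3 statements merged into one kernel-verified Lean document; each statement's English description precedes it below -/
import Mathlib

section
/- If nonnegative reals r_0 = 0 ≤ r_1 ≤ ... ≤ r_{ℓ+1}, cost increments d_1,...,d_{ℓ+1} > 0 with ∑_{k=1}^{ℓ+1} d_k > B > 0, and for each i, r_i - r_{i-1} ≥ ((OPT - r_{i-1})/B)·d_i, then r_{ℓ+1} ≥ (1 - 1/e)·OPT. -/
theorem stmt_5 (ℓ : ℕ) (r d : ℕ → ℝ) (B OPT : ℝ)
    (hB : 0 < B) (hOPT : 0 ≤ OPT)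
    (hr0 : r 0 = 0)
    (hmono : ∀ i, i ≤ ℓ → r i ≤ r (i + 1))
    (hd : ∀ k, 1 ≤ k → k ≤ ℓ + 1 → 0 < d k)
    (hsum : B < ∑ k ∈ Finset.Icc 1 (ℓ + 1), d k)
    (hstep : ∀ i, 1 ≤ i → i ≤ ℓ + 1 →
      r i - r (i - 1) ≥ ((OPT - r (i - 1)) / B) * d i) :
    r (ℓ + 1) ≥ (1 - 1 / Real.exp 1) * OPT := by
  have key : ∀ i, i ≤ ℓ + 1 →
      OPT - r i ≤ OPT * Real.exp (-(∑ k ∈ Finset.Icc 1 i, d k) / B) := by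
    intro i
    induction i with
    | zero => intro _; simp [hr0]
    | succ n ih =>
      intro hn
      have hn' : n ≤ ℓ + 1 := Nat.le_of_succ_le hn
      have hnℓ : n ≤ ℓ := Nat.lt_succ_iff.mp hn
      have ihn := ih hn'
      have hsplit : ∑ k ∈ Finset.Icc 1 (n + 1), d k
          = (∑ k ∈ Finset.Icc 1 n, d k) + d (n + 1) :=
        Finset.sum_Icc_succ_top (by omega) d
      have hst := hstep (n + 1) (by omega) (by omega)
      simp only [Nat.add_sub_cancel] at hst
      rcases le_or_gt (OPT - r n) 0 with hle | hpos
      · have hmn := hmono n hnℓ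
        have : OPT - r (n + 1) ≤ 0 := by linarith
        have hpos' : 0 ≤ OPT * Real.exp (-(∑ k ∈ Finset.Icc 1 (n + 1), d k) / B) :=
          mul_nonneg hOPT (Real.exp_pos _).le
        linarith
      · have h1 : OPT - r (n + 1) ≤ (OPT - r n) * (1 - d (n + 1) / B) := by
          have hr : (OPT - r n) * (1 - d (n + 1) / B)
              = OPT - r n - ((OPT - r n) / B) * d (n + 1) := by ring
          linarith [hst, hr.ge, hr.le]
        have h2 : 1 - d (n + 1) / B ≤ Real.exp (-(d (n + 1) / B)) := by
          have := Real.add_one_le_exp (-(d (n + 1) / B))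
          linarith
        have h3 : (OPT - r n) * (1 - d (n + 1) / B)
            ≤ (OPT - r n) * Real.exp (-(d (n + 1) / B)) :=
          mul_le_mul_of_nonneg_left h2 hpos.le
        have h4 : (OPT - r n) * Real.exp (-(d (n + 1) / B))
            ≤ OPT * Real.exp (-(∑ k ∈ Finset.Icc 1 n, d k) / B)
              * Real.exp (-(d (n + 1) / B)) :=
          mul_le_mul_of_nonneg_right ihn (Real.exp_pos _).le
        have h5 : OPT * Real.exp (-(∑ k ∈ Finset.Icc 1 n, d k) / B)
              * Real.exp (-(d (n + 1) / B))
            = OPT * Real.exp (-(∑ k ∈ Finset.Icc 1 (n + 1), d k) / B) := by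
          rw [hsplit, mul_assoc, ← Real.exp_add]
          ring_nf
        linarith [h1, h3, h4, h5.le, h5.ge]
  have hfin := key (ℓ + 1) le_rfl
  have hS : 1 < (∑ k ∈ Finset.Icc 1 (ℓ + 1), d k) / B := (one_lt_div hB).2 hsum
  have hexp : Real.exp (-(∑ k ∈ Finset.Icc 1 (ℓ + 1), d k) / B) ≤ Real.exp (-1) := by
    apply Real.exp_le_exp.2
    rw [neg_div]
    linarith
  have hmul : OPT * Real.exp (-(∑ k ∈ Finset.Icc 1 (ℓ + 1), d k) / B)
      ≤ OPT * Real.exp (-1) := mul_le_mul_of_nonneg_left hexp hOPT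
  have he : Real.exp (-1) = 1 / Real.exp 1 := by
    rw [Real.exp_neg, one_div]
  rw [he] at hmul
  nlinarith [hfin, hmul]
end

section
/- The dynamic programming recurrence R[i,b] = max over 1 ≤ j ≤ min(b-i+2, n) of (R[i-1, b-j] + T[i,j]) for b > i-1 (with R[i,i-1] = 0 and R[i,b] = -∞ for b < i-1) computes, for every i and b, the maximum total reward of a closed tour from v_{1,1} of cost at most 2b that visits the first i rows of A(m,n) and reaches row i (i.e., includes vertex v_{i,1}), where T[i,j] = ∑_{k=1}^{j} w(i,k). -/
theorem stmt_15 (m n : ℕ) (hm : 1 ≤ m) (hn : 1 ≤ n)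
    (w : ℕ → ℕ → ℝ) (hw : ∀ i j, 0 ≤ w i j) (hw1 : ∀ i, w i 1 = 0)
    (T : ℕ → ℕ → ℝ) (hT : ∀ i j, T i j = ∑ k ∈ Finset.Icc 1 j, w i k)
    (R : ℕ → ℕ → ℝ)
    (hR1 : ∀ b, R 1 b = T 1 (min (b + 1) n))
    (hRbase : ∀ i, 2 ≤ i → R i (i - 1) = 0)
    (hRrec : ∀ i b, 2 ≤ i → i - 1 < b →
      ∃ hne : (Finset.Icc 1 (min (b - i + 2) n)).Nonempty,
        R i b = (Finset.Icc 1 (min (b - i + 2) n)).sup' hne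
          (fun j => R (i - 1) (b - j) + T i j)) :
    ∀ i b, 1 ≤ i → i ≤ m → i - 1 ≤ b →
      IsGreatest
        {x : ℝ | ∃ c : ℕ → ℕ, (∀ k ∈ Finset.Icc 1 i, 1 ≤ c k ∧ c k ≤ n) ∧
          (i - 1) + ∑ k ∈ Finset.Icc 1 i, (c k - 1) ≤ b ∧
          x = ∑ k ∈ Finset.Icc 1 i, T k (c k)}
        (R i b) := by
  classical
  have hTmono : ∀ i j j', j ≤ j' → T i j ≤ T i j' := by
    intro i j j' h
    rw [hT, hT]
    refine Finset.sum_le_sum_of_subset_of_nonneg (Finset.Icc_subset_Icc_right h) ?_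
    intro k _ _; exact hw i k
  have hT1 : ∀ i, T i 1 = 0 := by
    intro i; rw [hT]; simp [hw1]
  intro i b h1 him hb
  clear him hm
  revert hb
  induction i, h1 using Nat.le_induction generalizing b with
  | base =>
    intro hb
    constructor
    · refine ⟨fun _ => min (b + 1) n, ?_, ?_, ?_⟩
      · intro k hk; exact ⟨le_min (by omega) hn, min_le_right _ _⟩
      · simp only [Finset.Icc_self, Finset.sum_singleton]; omega
      · simp only [Finset.Icc_self, Finset.sum_singleton]; rw [hR1]
    · rintro x ⟨c, hc, hcost, rfl⟩
      simp only [Finset.Icc_self, Finset.sum_singleton] at hcost ⊢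
      obtain ⟨hc1, hc2⟩ := hc 1 (by simp)
      rw [hR1]
      exact hTmono 1 (c 1) _ (by omega)
  | succ i hi IH =>
    intro hb
    have hi1 : (i + 1) - 1 = i := by omega
    rcases eq_or_lt_of_le hb with hbe | hbl
    · -- b = i
      have hbi : b = i := by omega
      have hR0 : R (i + 1) b = 0 := by
        rw [hbi]
        have := hRbase (i + 1) (by omega)
        rwa [hi1] at this
      rw [hR0]
      constructor
      · refine ⟨fun _ => 1, ?_, ?_, ?_⟩
        · intro k hk; exact ⟨le_refl 1, hn⟩
        · have h0 : ∑ k ∈ Finset.Icc 1 (i + 1), ((fun _ => (1:ℕ)) k - 1) = 0 := by simp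
          omega
        · rw [Finset.sum_eq_zero]; intro k _; exact hT1 k
      · rintro x ⟨c, hc, hcost, rfl⟩
        have hall : ∀ k ∈ Finset.Icc 1 (i + 1), c k = 1 := by
          have hz : ∑ k ∈ Finset.Icc 1 (i + 1), (c k - 1) = 0 := by omega
          intro k hk
          have := (Finset.sum_eq_zero_iff.mp hz) k hk
          have := (hc k hk).1
          omega
        have : ∑ k ∈ Finset.Icc 1 (i + 1), T k (c k) = 0 := by
          apply Finset.sum_eq_zero
          intro k hk; rw [hall k hk]; exact hT1 k
        exact le_of_eq this
    · -- b > i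
      rw [hi1] at hbl
      obtain ⟨hne, hrec⟩ := hRrec (i + 1) b (by omega) (by rw [hi1]; exact hbl)
      rw [hi1] at hrec
      constructor
      · -- membership
        obtain ⟨j, hjmem, hjeq⟩ := Finset.exists_mem_eq_sup' hne
          (fun j => R i (b - j) + T (i + 1) j)
        simp only [Finset.mem_Icc] at hjmem
        have hbj : i - 1 ≤ b - j := by omega
        obtain ⟨⟨c', hc', hcost', hval'⟩, -⟩ := IH (b - j) hbj
        have hk' : ∀ k ∈ Finset.Icc 1 i, k ≠ i + 1 := by
          intro k hk; simp only [Finset.mem_Icc] at hk; omega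
        have e1 : ∑ k ∈ Finset.Icc 1 i, (Function.update c' (i + 1) j k - 1)
            = ∑ k ∈ Finset.Icc 1 i, (c' k - 1) :=
          Finset.sum_congr rfl fun k hk => by rw [Function.update_of_ne (hk' k hk)]
        have e2 : ∑ k ∈ Finset.Icc 1 i, T k (Function.update c' (i + 1) j k)
            = ∑ k ∈ Finset.Icc 1 i, T k (c' k) :=
          Finset.sum_congr rfl fun k hk => by rw [Function.update_of_ne (hk' k hk)]
        refine ⟨Function.update c' (i + 1) j, ?_, ?_, ?_⟩
        · intro k hk
          rcases eq_or_ne k (i + 1) with h | h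
          · subst h
            simp only [Function.update_self]
            omega
          · rw [Function.update_of_ne h]
            simp only [Finset.mem_Icc] at hk
            exact hc' k (Finset.mem_Icc.mpr ⟨hk.1, by omega⟩)
        · rw [Finset.sum_Icc_succ_top (by omega : 1 ≤ i + 1), e1]
          simp only [Function.update_self]
          omega
        · rw [Finset.sum_Icc_succ_top (by omega : 1 ≤ i + 1), e2]
          simp only [Function.update_self]
          rw [← hval', hrec, hjeq]
      · -- upper bound
        rintro x ⟨c, hc, hcost, rfl⟩
        obtain ⟨hj1, hjn⟩ := hc (i + 1) (Finset.mem_Icc.mpr ⟨by omega, le_refl _⟩)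
        rw [Finset.sum_Icc_succ_top (by omega : 1 ≤ i + 1)] at hcost ⊢
        have hjmem : c (i + 1) ∈ Finset.Icc 1 (min (b - (i + 1) + 2) n) := by
          simp only [Finset.mem_Icc]
          omega
        have hbj : i - 1 ≤ b - c (i + 1) := by omega
        obtain ⟨-, hub⟩ := IH (b - c (i + 1)) hbj
        have hle : ∑ k ∈ Finset.Icc 1 i, T k (c k) ≤ R i (b - c (i + 1)) := by
          apply hub
          refine ⟨c, ?_, ?_, rfl⟩
          · intro k hk
            simp only [Finset.mem_Icc] at hk
            exact hc k (Finset.mem_Icc.mpr ⟨hk.1, by omega⟩)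
          · omega
        calc ∑ k ∈ Finset.Icc 1 i, T k (c k) + T (i + 1) (c (i + 1))
            ≤ R i (b - c (i + 1)) + T (i + 1) (c (i + 1)) := by linarith
          _ ≤ _ := by
              rw [hrec]
              exact Finset.le_sup' (fun j => R i (b - j) + T (i + 1) j) hjmem
end

section
/- Greedy marginal-gain bound: let G_{i-1} ⊆ V, OPT ⊆ V with C(OPT) ≤ B, and suppose the greedy step selects x_i maximizing (R(X ∪ {v}) - R(X))/(C(X ∪ {v}) - C(X)) over v ∉ G_{i-1} where R is a nonnegative modular function and the marginal costs C(G_{i-1} ∪ {v}) - C(G_{i-1}) are positive and satisfy C(G_{i-1} ∪ {y}) - C(G_{i-1}) ≤ C({y}) for all y. Then R(G_i) - R(G_{i-1}) ≥ ((R(OPT) - R(G_{i-1}))/B)·(C(G_i) - C(G_{i-1})). -/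
theorem stmt_18 {V : Type*} [DecidableEq V] [Fintype V]
    (w : V → ℝ) (hw : ∀ x, 0 ≤ w x)
    (C : Finset V → ℝ) (B : ℝ) (hB : 0 < B)
    (G OPT : Finset V) (x : V) (hx : x ∉ G)
    (hCpos : ∀ y : V, 0 ≤ C {y})
    (hΔpos : ∀ v : V, v ∉ G → 0 < C (insert v G) - C G)
    (hΔle : ∀ y : V, C (insert y G) - C G ≤ C {y})
    (hOPTB : ∑ y ∈ OPT, C {y} ≤ B)
    (hgreedy : ∀ v : V, v ∉ G →
      ((∑ z ∈ insert v G, w z) - ∑ z ∈ G, w z) / (C (insert v G) - C G) ≤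
        ((∑ z ∈ insert x G, w z) - ∑ z ∈ G, w z) / (C (insert x G) - C G)) :
    (∑ z ∈ insert x G, w z) - ∑ z ∈ G, w z ≥
      (((∑ y ∈ OPT, w y) - ∑ z ∈ G, w z) / B) * (C (insert x G) - C G) := by
  have hΔx := hΔpos x hx
  have hgx : (∑ z ∈ insert x G, w z) - ∑ z ∈ G, w z = w x := by
    rw [Finset.sum_insert hx]; ring
  set ρ : ℝ := w x / (C (insert x G) - C G) with hρ
  have hρ0 : 0 ≤ ρ := div_nonneg (hw x) hΔx.le
  have key : ∀ y ∈ OPT \ G, w y ≤ ρ * C {y} := by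
    intro y hy
    have hyG : y ∉ G := (Finset.mem_sdiff.mp hy).2
    have hΔy := hΔpos y hyG
    have h1 := hgreedy y hyG
    rw [hgx, Finset.sum_insert hyG] at h1
    have h1' : w y / (C (insert y G) - C G) ≤ ρ := by
      simpa using h1
    have h2 : w y ≤ ρ * (C (insert y G) - C G) := (div_le_iff₀ hΔy).mp h1'
    exact h2.trans (mul_le_mul_of_nonneg_left (hΔle y) hρ0)
  have hsum1 : (∑ y ∈ OPT, w y) - ∑ z ∈ G, w z ≤ ∑ y ∈ OPT \ G, w y := by
    have : ∑ y ∈ OPT, w y ≤ ∑ y ∈ OPT ∪ G, w y :=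
      Finset.sum_le_sum_of_subset_of_nonneg Finset.subset_union_left
        (fun i _ _ => hw i)
    have hunion : ∑ y ∈ OPT ∪ G, w y = ∑ y ∈ OPT \ G, w y + ∑ z ∈ G, w z := by
      have hd : Disjoint (OPT \ G) G := Finset.sdiff_disjoint
      rw [← Finset.sum_union hd, Finset.sdiff_union_self_eq_union]
    linarith
  have hsum2 : ∑ y ∈ OPT \ G, w y ≤ ρ * ∑ y ∈ OPT \ G, C {y} := by
    rw [Finset.mul_sum]
    exact Finset.sum_le_sum key
  have hsum3 : ∑ y ∈ OPT \ G, C {y} ≤ ∑ y ∈ OPT, C {y} :=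
    Finset.sum_le_sum_of_subset_of_nonneg (Finset.sdiff_subset)
      (fun i _ _ => hCpos i)
  have hfin : (∑ y ∈ OPT, w y) - ∑ z ∈ G, w z ≤ ρ * B := by
    calc (∑ y ∈ OPT, w y) - ∑ z ∈ G, w z ≤ ρ * ∑ y ∈ OPT \ G, C {y} :=
          hsum1.trans hsum2
      _ ≤ ρ * B := mul_le_mul_of_nonneg_left (hsum3.trans hOPTB) hρ0
  have hdiv : ((∑ y ∈ OPT, w y) - ∑ z ∈ G, w z) / B ≤ ρ :=
    (div_le_iff₀ hB).mpr hfin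
  have := mul_le_mul_of_nonneg_right hdiv hΔx.le
  rw [hgx]
  have hρΔ : ρ * (C (insert x G) - C G) = w x :=
    div_mul_cancel₀ _ (ne_of_gt hΔx)
  linarith
end
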